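/- Let A, B ∈ M_n(ℝ₊) be triangularizable max-plus projectors (A⊗A = A, B⊗B = B). If the max commutator C = (A⊗B) ⊕ (B⊗A) is nilpotent, then A and B are simultaneously triangularizable by a permutation matrix. -/

import Mathlib

open Matrix Finset

noncomputable section

/-- Max-plus matrix product: `(A ⊗ B) i j = max_k (A i k * B k j)`. -/
def mMul {n : ℕ} (A B : Matrix (Fin n) (Fin n) NNReal) : Matrix (Fin n) (Fin n) NNReal :=
  fun i j => Finset.univ.sup fun k => A i k * B k j

/-- Entrywise maximum of matrices. -/
def msup {n : ℕ} (A B : Matrix (Fin n) (Fin n) NNReal) : Matrix (Fin n) (Fin n) NNReal :=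
  fun i j => max (A i j) (B i j)

/-- Max-plus powers. -/
def mPow {n : ℕ} (A : Matrix (Fin n) (Fin n) NNReal) : ℕ → Matrix (Fin n) (Fin n) NNReal
  | 0 => 1
  | k + 1 => mMul A (mPow A k)

/-- Conjugation by the permutation matrix of `σ` : `(P⁻¹AP) i j = A (σ i) (σ j)`. -/
def conjP {n : ℕ} (σ : Equiv.Perm (Fin n)) (A : Matrix (Fin n) (Fin n) NNReal) :
    Matrix (Fin n) (Fin n) NNReal := fun i j => A (σ i) (σ j)

/-- Upper triangular. -/
def UpperTri {n : ℕ} (M : Matrix (Fin n) (Fin n) NNReal) : Prop :=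
  ∀ i j : Fin n, j < i → M i j = 0

/-- Edge relation of the digraph `G_A`. -/
def Edge {n : ℕ} (A : Matrix (Fin n) (Fin n) NNReal) (i j : Fin n) : Prop := 0 < A i j

/-- `G_A` has no directed cycle passing through at least two distinct vertices. -/
def NoMultiVertexCycle {n : ℕ} (A : Matrix (Fin n) (Fin n) NNReal) : Prop :=
  ∀ i j : Fin n, i ≠ j →
    ¬(Relation.TransGen (Edge A) i j ∧ Relation.TransGen (Edge A) j i)

/-- Triangularizable via a permutation matrix. -/
def Triangularizable {n : ℕ} (A : Matrix (Fin n) (Fin n) NNReal) : Prop :=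
  ∃ σ : Equiv.Perm (Fin n), UpperTri (conjP σ A)

/-- Simultaneously triangularizable via one permutation matrix. -/
def SimTriangularizable {n : ℕ} (A B : Matrix (Fin n) (Fin n) NNReal) : Prop :=
  ∃ σ : Equiv.Perm (Fin n), UpperTri (conjP σ A) ∧ UpperTri (conjP σ B)

/-- Max-plus nilpotency. -/
def MNilpotent {n : ℕ} (A : Matrix (Fin n) (Fin n) NNReal) : Prop :=
  ∃ k : ℕ, mPow A k = 0

/-- Tropical determinant. -/
def tdet {n : ℕ} (M : Matrix (Fin n) (Fin n) NNReal) : NNReal :=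
  Finset.univ.sup fun σ : Equiv.Perm (Fin n) => ∏ i, M i (σ i)

/-- The matrix `M(z) = I ⊕ z₁A ⊕ z₂B`. -/
def Mz {n : ℕ} (A B : Matrix (Fin n) (Fin n) NNReal) (z₁ z₂ : NNReal) :
    Matrix (Fin n) (Fin n) NNReal :=
  fun i j => max (max ((1 : Matrix (Fin n) (Fin n) NNReal) i j) (z₁ * A i j)) (z₂ * B i j)

/-!
The supports `G_A`, `G_B` of the projectors are transitive relations, and nilpotency of
`C = A ⊗ B ⊕ B ⊗ A` says that the graph of two-step walks `G_A G_B ∪ G_B G_A` is acyclic.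
After merging consecutive edges of equal colour, a closed walk in `G_A ∪ G_B` that uses both
colours alternates, so its consecutive pairs of edges form a cycle of `C`. Hence every cycle of
`G_A ∪ G_B` through two distinct vertices is monochromatic, which triangularizability of `A` or of
`B` rules out; and a graph without such cycles is triangularized by ordering the vertices by their
number of ancestors.
-/

open Relation

section Walks

variable {α : Type*} {r s : α → α → Prop} [IsTrans α r] [IsTrans α s]

-- By transitivity of `r` and `s`, a walk that starts with an `r`-edge reduces to `(r s)* r s?`.
theorem exists_reflTransGen_comp_of_rel_of_reflTransGen_sup {x y u : α} (hxy : r x y)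
    (hyu : ReflTransGen (r ⊔ s) y u) :
    ∃ k m, ReflTransGen (Comp r s) x k ∧ r k m ∧ ReflGen s m u := by
  induction hyu with
  | refl => exact ⟨x, y, .refl, hxy, .refl⟩
  | tail _ hvw ih =>
    obtain ⟨k, m, hxk, hkm, hmv⟩ := ih
    rcases hvw with hvw | hvw <;> rcases hmv with _ | hmv
    · exact ⟨k, _, hxk, _root_.trans hkm hvw, .refl⟩
    · exact ⟨_, _, hxk.tail ⟨m, hkm, hmv⟩, hvw, .refl⟩
    · exact ⟨k, _, hxk, hkm, .single hvw⟩
    · exact ⟨k, _, hxk, hkm, .single (_root_.trans hmv hvw)⟩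

theorem transGen_comp_of_rel_of_reflTransGen_sup_of_rel {x y u z : α} (hxy : r x y)
    (hyu : ReflTransGen (r ⊔ s) y u) (huz : s u z) : TransGen (Comp r s) x z := by
  obtain ⟨k, m, hxk, hkm, hmu⟩ := exists_reflTransGen_comp_of_rel_of_reflTransGen_sup hxy hyu
  have hmz : s m z := by
    rcases hmu with _ | hmu
    exacts [huz, _root_.trans hmu huz]
  exact TransGen.tail' hxk ⟨m, hkm, hmz⟩

theorem not_reflTransGen_sup_of_comp_sup_comp (hC : ∀ v, ¬ TransGen (Comp r s ⊔ Comp s r) v v)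
    {u w : α} (huw : (Comp r s ⊔ Comp s r) u w) : ¬ ReflTransGen (r ⊔ s) w u := by
  intro hwu
  -- rotate the closed walk so that it starts right after the change of colour
  rcases huw with ⟨v, huv, hvw⟩ | ⟨v, huv, hvw⟩
  · rw [sup_comm r s] at hwu
    exact hC v (TransGen.mono le_sup_right _ _
      (transGen_comp_of_rel_of_reflTransGen_sup_of_rel hvw hwu huv))
  · exact hC v (TransGen.mono le_sup_left _ _
      (transGen_comp_of_rel_of_reflTransGen_sup_of_rel hvw hwu huv))

theorem rel_or_rel_or_exists_comp_of_transGen_sup {x y : α} (hxy : TransGen (r ⊔ s) x y) :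
    r x y ∨ s x y ∨ ∃ u w, ReflTransGen (r ⊔ s) x u ∧ (Comp r s ⊔ Comp s r) u w ∧
      ReflTransGen (r ⊔ s) w y := by
  induction hxy with
  | single h => exact h.imp_right Or.inl
  | tail _ hyz ih =>
    rcases ih with h | h | ⟨u, w, hxu, huw, hwy⟩
    · rcases hyz with h' | h'
      · exact Or.inl (_root_.trans h h')
      · exact Or.inr (Or.inr ⟨_, _, .refl, Or.inl ⟨_, h, h'⟩, .refl⟩)
    · rcases hyz with h' | h'
      · exact Or.inr (Or.inr ⟨_, _, .refl, Or.inr ⟨_, h, h'⟩, .refl⟩)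
      · exact Or.inr (Or.inl (_root_.trans h h'))
    · exact Or.inr (Or.inr ⟨u, w, hxu, huw, hwy.tail hyz⟩)

theorem rel_and_rel_or_rel_and_rel_of_transGen_sup
    (hC : ∀ v, ¬ TransGen (Comp r s ⊔ Comp s r) v v)
    {i j : α} (hij : TransGen (r ⊔ s) i j) (hji : TransGen (r ⊔ s) j i) :
    (r i j ∧ r j i) ∨ (s i j ∧ s j i) := by
  have not_mixed : ∀ {x y}, TransGen (r ⊔ s) y x → ¬ ∃ u w, ReflTransGen (r ⊔ s) x u ∧
      (Comp r s ⊔ Comp s r) u w ∧ ReflTransGen (r ⊔ s) w y :=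
    fun hyx ⟨_, _, hxu, huw, hwy⟩ => not_reflTransGen_sup_of_comp_sup_comp hC huw
      (hwy.trans (hyx.to_reflTransGen.trans hxu))
  rcases rel_or_rel_or_exists_comp_of_transGen_sup hij with hij' | hij' | hij'
  · rcases rel_or_rel_or_exists_comp_of_transGen_sup hji with hji' | hji' | hji'
    · exact Or.inl ⟨hij', hji'⟩
    · exact absurd (.single (Or.inl ⟨j, hij', hji'⟩)) (hC i)
    · exact absurd hji' (not_mixed hij)
  · rcases rel_or_rel_or_exists_comp_of_transGen_sup hji with hji' | hji' | hji'
    · exact absurd (.single (Or.inr ⟨j, hij', hji'⟩)) (hC i)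
    · exact Or.inr ⟨hij', hji'⟩
    · exact absurd hji' (not_mixed hij)
  · exact absurd hij' (not_mixed hji)

end Walks

section Matrices

variable {n : ℕ}

theorem edge_msup (M N : Matrix (Fin n) (Fin n) NNReal) : Edge (msup M N) = Edge M ⊔ Edge N := by
  ext i j
  exact lt_max_iff

theorem edge_mMul (M N : Matrix (Fin n) (Fin n) NNReal) :
    Edge (mMul M N) = Comp (Edge M) (Edge N) := by
  ext i j
  simp only [Edge, mMul, Finset.lt_sup_iff, Finset.mem_univ, true_and,
    CanonicallyOrderedAdd.mul_pos, Comp]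

theorem isTrans_edge_of_mMul_self {M : Matrix (Fin n) (Fin n) NNReal} (hM : mMul M M = M) :
    IsTrans (Fin n) (Edge M) :=
  ⟨fun i k j hik hkj => hM ▸ (edge_mMul M M ▸ ⟨k, hik, hkj⟩ : Edge (mMul M M) i j)⟩

theorem MNilpotent.not_transGen_edge_self {M : Matrix (Fin n) (Fin n) NNReal} (hM : MNilpotent M)
    (v : Fin n) : ¬ TransGen (Edge M) v v := by
  intro hv
  -- going round the cycle through `v`, there are walks of every length ending at `v`
  have hwalk : ∀ k, ∃ w, TransGen (Edge M) v w ∧ Edge (mPow M k) w v := by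
    intro k
    induction k with
    | zero => exact ⟨v, hv, by simp [Edge, mPow]⟩
    | succ k ih =>
      obtain ⟨w, hvw, hwv⟩ := ih
      obtain ⟨w', hvw', hw'w⟩ := TransGen.tail'_iff.1 hvw
      refine ⟨w', hv.trans_left hvw', ?_⟩
      rw [mPow, edge_mMul]
      exact ⟨w, hw'w, hwv⟩
  obtain ⟨k, hk⟩ := hM
  obtain ⟨w, -, hw⟩ := hwalk k
  simp [Edge, hk] at hw

theorem upperTri_msup_iff {M N : Matrix (Fin n) (Fin n) NNReal} :
    UpperTri (msup M N) ↔ UpperTri M ∧ UpperTri N := by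
  simp only [UpperTri, msup, ← bot_eq_zero, _root_.max_eq_bot, imp_and, forall_and]

theorem simTriangularizable_iff_triangularizable_msup {A B : Matrix (Fin n) (Fin n) NNReal} :
    SimTriangularizable A B ↔ Triangularizable (msup A B) := by
  simp only [SimTriangularizable, Triangularizable, ← upperTri_msup_iff]
  rfl

theorem Triangularizable.noMultiVertexCycle {M : Matrix (Fin n) (Fin n) NNReal}
    (hM : Triangularizable M) : NoMultiVertexCycle M := by
  obtain ⟨σ, hσ⟩ := hM
  have hedge_le : ∀ {x y}, Edge M x y → σ.symm x ≤ σ.symm y := fun {x y} hxy => by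
    by_contra! hlt
    have := hσ _ _ hlt
    simp only [conjP, Equiv.apply_symm_apply] at this
    exact hxy.ne' this
  have hpath_le : ∀ {x y}, TransGen (Edge M) x y → σ.symm x ≤ σ.symm y := fun h => by
    induction h with
    | single h => exact hedge_le h
    | tail _ h ih => exact ih.trans (hedge_le h)
  exact fun i j hij ⟨hij', hji'⟩ =>
    hij (σ.symm.injective ((hpath_le hij').antisymm (hpath_le hji')))

theorem upperTri_conjP_sort_of_edge {α : Type*} [LinearOrder α]
    {M : Matrix (Fin n) (Fin n) NNReal} {f : Fin n → α}
    (hf : ∀ i j, i ≠ j → Edge M i j → f i < f j) :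
    UpperTri (conjP (Tuple.sort f) M) := by
  intro i j hji
  by_contra hne
  have hne' : Tuple.sort f i ≠ Tuple.sort f j := (Tuple.sort f).injective.ne hji.ne'
  exact (hf _ _ hne' (pos_iff_ne_zero.2 hne)).not_ge (Tuple.monotone_sort f hji.le)

theorem NoMultiVertexCycle.triangularizable {M : Matrix (Fin n) (Fin n) NNReal}
    (hM : NoMultiVertexCycle M) : Triangularizable M := by
  classical
  -- the number of vertices from which `x` is reachable strictly increases along edges
  let rank : Fin n → ℕ := fun x => #{y | ReflTransGen (Edge M) y x}
  refine ⟨Tuple.sort rank, upperTri_conjP_sort_of_edge fun x y hxy hedge => ?_⟩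
  refine Finset.card_lt_card ((Finset.ssubset_iff_of_subset ?_).2 ⟨y, ?_, ?_⟩)
  · intro z hz
    simp only [Finset.mem_filter, Finset.mem_univ, true_and] at hz ⊢
    exact hz.tail hedge
  · exact Finset.mem_filter.2 ⟨Finset.mem_univ y, .refl⟩
  · simp only [Finset.mem_filter, Finset.mem_univ, true_and, reflTransGen_iff_eq_or_transGen]
    rintro (rfl | hyx)
    exacts [hxy rfl, hM x y hxy ⟨.single hedge, hyx⟩]

theorem triangularizable_iff_noMultiVertexCycle {M : Matrix (Fin n) (Fin n) NNReal} :
    Triangularizable M ↔ NoMultiVertexCycle M :=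
  ⟨Triangularizable.noMultiVertexCycle, NoMultiVertexCycle.triangularizable⟩

end Matrices

theorem stmt12 {n : ℕ} (A B : Matrix (Fin n) (Fin n) NNReal)
    (hA : Triangularizable A) (hB : Triangularizable B)
    (hpA : mMul A A = A) (hpB : mMul B B = B)
    (hnil : MNilpotent (msup (mMul A B) (mMul B A))) :
    SimTriangularizable A B := by
  have := isTrans_edge_of_mMul_self hpA
  have := isTrans_edge_of_mMul_self hpB
  have hC : ∀ v, ¬ TransGen (Comp (Edge A) (Edge B) ⊔ Comp (Edge B) (Edge A)) v v := by
    simpa only [edge_msup, edge_mMul] using hnil.not_transGen_edge_self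
  rw [simTriangularizable_iff_triangularizable_msup, triangularizable_iff_noMultiVertexCycle]
  rintro i j hij ⟨hij', hji'⟩
  rw [edge_msup] at hij' hji'
  rcases rel_and_rel_or_rel_and_rel_of_transGen_sup hC hij' hji' with ⟨h, h'⟩ | ⟨h, h'⟩
  · exact hA.noMultiVertexCycle i j hij ⟨.single h, .single h'⟩
  · exact hB.noMultiVertexCycle i j hij ⟨.single h, .single h'⟩
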